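/- Let H be a finite-dimensional Hopf algebra over a field k and let g ∈ H be a grouplike element. Then the space L_g = { φ ∈ H* : (id ⊗ φ)(Δ(a)) = φ(a)·g for all a ∈ H } of left g-cointegrals is one-dimensional over k. -/

import Mathlib

open scoped TensorProduct

/-- An element `g` of a Hopf algebra is grouplike if `Δ(g) = g ⊗ g` and `ε(g) = 1`. -/
def IsGrouplike (k H : Type) [Field k] [Ring H] [HopfAlgebra k H] (g : H) : Prop :=
  Coalgebra.comul (R := k) g = g ⊗ₜ[k] g ∧ Coalgebra.counit (R := k) g = 1

/-- The map `H ⊗ H → H`, `x ⊗ y ↦ φ(y) • x`, i.e. `(id ⊗ φ)` followed by `H ⊗ k ≅ H`. -/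
noncomputable def idTens (k H : Type) [Field k] [Ring H] [Algebra k H]
    (φ : H →ₗ[k] k) : H ⊗[k] H →ₗ[k] H :=
  (TensorProduct.rid k H).toLinearMap ∘ₗ (LinearMap.lTensor H φ)

/-- The space `L_g` of left `g`-cointegrals on a Hopf algebra:
all `φ ∈ H*` with `(id ⊗ φ)(Δ(a)) = φ(a) • g` for all `a`. -/
noncomputable def leftCointegrals (k H : Type) [Field k] [Ring H] [HopfAlgebra k H]
    (g : H) : Submodule k (H →ₗ[k] k) where
  carrier := {φ | ∀ a : H, idTens k H φ (Coalgebra.comul (R := k) a) = φ a • g}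
  add_mem' := by
    intro φ ψ hφ hψ a
    simp only [idTens, LinearMap.comp_apply] at *
    rw [LinearMap.lTensor_add, LinearMap.add_apply, map_add, hφ a, hψ a,
      LinearMap.add_apply, add_smul]
  zero_mem' := by
    intro a
    simp [idTens]
  smul_mem' := by
    intro c φ hφ a
    simp only [idTens, LinearMap.comp_apply] at *
    rw [LinearMap.lTensor_smul, LinearMap.smul_apply, map_smul, hφ a,
      LinearMap.smul_apply, smul_assoc]

/-!
Larson–Sweedler. For finite-dimensional `H` the dual `H*` is a right Hopf module over `H`: the
coaction `ρ` is `hit φ = (id ⊗ φ) ∘ Δ`, read as an element of `H* ⊗ H ≅ End H`, and `H` acts by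
`φ ↼ h = φ (· * S h)`. Its coinvariants are exactly the left `1`-cointegrals, and the fundamental
theorem of Hopf modules, with the projection `P φ = φ₀ ↼ S φ₁` onto the coinvariants, gives
`L₁ ⊗ H ≅ H*`, so `dim L₁ = 1`. A grouplike `g` is a unit with inverse `S g`, and precomposition
with right multiplication by `g` maps `L_g` isomorphically onto `L₁`.
-/

open Coalgebra HopfAlgebra

namespace HopfAlgebra

variable {R A : Type*} [CommSemiring R] [Semiring A] [HopfAlgebra R A]

open Algebra.TensorProduct WithConv in
lemma comul_comp_antipode :
    comul ∘ₗ antipode R = (TensorProduct.comm R A A).toLinearMap ∘ₗ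
      TensorProduct.map (antipode R) (antipode R) ∘ₗ comul := by
  -- `Δ = ι₁ * ι₂` in the convolution algebra, so `(ι₂ ∘ S) * (ι₁ ∘ S)` is a left inverse of `Δ`,
  -- and `Δ ∘ S` is a right inverse of `Δ`.
  have hcomul : toConv (comul : A →ₗ[R] A ⊗[R] A) =
      toConv (includeLeft : A →ₐ[R] A ⊗[R] A).toLinearMap * toConv includeRight.toLinearMap := by
    ext a; simp [(ℛ R a).convMul_apply, ← (ℛ R a).eq]
  have hinv (ι : A →ₐ[R] A ⊗[R] A) :
      toConv (ι.toLinearMap ∘ₗ antipode R) * toConv ι.toLinearMap = 1 := by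
    have := LinearMap.algHom_comp_convMul_distrib ι (toConv (antipode R)) (toConv LinearMap.id)
    rw [LinearMap.antipode_mul_id] at this
    apply ofConv_injective
    simp only [LinearMap.comp_id] at this
    rw [← this]
    ext a; simp
  have hleftInv : toConv (includeRight.toLinearMap ∘ₗ antipode R) *
      toConv (includeLeft.toLinearMap ∘ₗ antipode R) * toConv (comul : A →ₗ[R] A ⊗[R] A) = 1 := by
    rw [hcomul, mul_assoc, ← mul_assoc (toConv (includeLeft.toLinearMap ∘ₗ antipode R)), hinv,
      one_mul, hinv]
  rw [← ofConv_toConv (comul ∘ₗ antipode R),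
    ← left_inv_eq_right_inv hleftInv (LinearMap.comul_right_inv (R := R) (C := A))]
  ext a
  simp [(ℛ R a).convMul_apply, ← (ℛ R a).eq]

lemma comul_antipode {ι : Type*} {a : A} (r : Repr R a ι) :
    comul (antipode R a) = ∑ i ∈ r.index, antipode R (r.right i) ⊗ₜ[R] antipode R (r.left i) := by
  simp [← LinearMap.comp_apply, comul_comp_antipode, ← r.eq]

@[simps]
def _root_.Coalgebra.Repr.antipode {ι : Type*} {a : A} (r : Repr R a ι) :
    Repr R (antipode R a) ι where
  index := r.index
  left i := HopfAlgebra.antipode R (r.right i)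
  right i := HopfAlgebra.antipode R (r.left i)
  eq := (comul_antipode r).symm

lemma sum_comul_antipode_mul {ι : Type*} {a : A} (r : Repr R a ι) :
    ∑ i ∈ r.index, comul (antipode R (r.left i)) * (r.right i ⊗ₜ[R] (1 : A)) =
      (1 : A) ⊗ₜ[R] antipode R a := by
  have := congrArg ((TensorProduct.comm R A A).toLinearMap ∘ₗ
      TensorProduct.map (antipode R) (LinearMap.mul' R A ∘ₗ (antipode R).rTensor A))
    (sum_tmul_tmul_eq r (fun i ↦ ℛ R (r.left i)) (fun i ↦ ℛ R (r.right i)))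
  simp only [map_sum, LinearMap.comp_apply, TensorProduct.map_tmul, LinearMap.rTensor_tmul,
    LinearMap.mul'_apply, LinearEquiv.coe_coe, TensorProduct.comm_tmul] at this
  have hcounit := congrArg (TensorProduct.map (Algebra.linearMap R A) (antipode R) ∘ₗ
    (TensorProduct.comm R A R).toLinearMap) (sum_tmul_counit_eq r)
  simp only [map_sum, LinearMap.comp_apply, LinearEquiv.coe_coe, TensorProduct.comm_tmul,
    TensorProduct.map_tmul, Algebra.linearMap_apply, map_one] at hcounit
  simp only [← TensorProduct.sum_tmul, sum_antipode_mul_eq_algebraMap_counit] at this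
  simp only [comul_antipode (ℛ R (r.left _)), Finset.sum_mul, Algebra.TensorProduct.tmul_mul_tmul,
    mul_one, this, hcounit]

end HopfAlgebra

section TensorContraction

variable {R A : Type*} [CommSemiring R] [Semiring A] [Algebra R A]

lemma rid_lTensor_mul_tmul_one (φ : A →ₗ[R] R) (t : A ⊗[R] A) (u : A) :
    TensorProduct.rid R A (φ.lTensor A (t * (u ⊗ₜ 1))) =
      TensorProduct.rid R A (φ.lTensor A t) * u := by
  induction t with
  | zero => simp
  | tmul a b => simp [Algebra.TensorProduct.tmul_mul_tmul]
  | add s t hs ht => simp [add_mul, hs, ht]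

lemma rid_lTensor_mul_one_tmul (φ : A →ₗ[R] R) (t : A ⊗[R] A) (v : A) :
    TensorProduct.rid R A (φ.lTensor A (t * (1 ⊗ₜ v))) =
      TensorProduct.rid R A ((φ ∘ₗ LinearMap.mulRight R v).lTensor A t) := by
  induction t with
  | zero => simp
  | tmul a b => simp [Algebra.TensorProduct.tmul_mul_tmul]
  | add s t hs ht => simp [add_mul, hs, ht]

end TensorContraction

section DualTensorHom

variable {R M N P : Type*} [CommSemiring R] [AddCommMonoid M] [Module R M] [AddCommMonoid N]
  [Module R N] [AddCommMonoid P] [Module R P]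

lemma dualTensorHom_assoc_tmul (s : Module.Dual R M ⊗[R] N) (p : P) (m : M) :
    dualTensorHom R M (N ⊗[R] P) (TensorProduct.assoc R _ N P (s ⊗ₜ p)) m =
      dualTensorHom R M N s m ⊗ₜ p := by
  induction s with
  | zero => simp
  | tmul ψ c => simp [TensorProduct.smul_tmul']
  | add s t hs ht => simp [TensorProduct.add_tmul, hs, ht]

end DualTensorHom

section Hit

variable {R C : Type*} [CommSemiring R] [AddCommMonoid C] [Module R C] [Coalgebra R C]

def hit : (C →ₗ[R] R) →ₗ[R] C →ₗ[R] C where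
  toFun φ := (TensorProduct.rid R C).toLinearMap ∘ₗ φ.lTensor C ∘ₗ comul
  map_add' φ ψ := by ext; simp [LinearMap.lTensor_add]
  map_smul' r φ := by ext; simp [LinearMap.lTensor_smul]

lemma hit_apply (φ : C →ₗ[R] R) (a : C) :
    hit φ a = TensorProduct.rid R C (φ.lTensor C (comul a)) := rfl

lemma hit_eq_sum {ι : Type*} (φ : C →ₗ[R] R) {a : C} (r : Repr R a ι) :
    hit φ a = ∑ i ∈ r.index, φ (r.right i) • r.left i := by
  simp [hit_apply, ← r.eq]

@[simp] lemma counit_hit (φ : C →ₗ[R] R) (a : C) : counit (R := R) (hit φ a) = φ a := by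
  conv_rhs => rw [← sum_counit_smul (ℛ R a)]
  simp [hit_eq_sum φ (ℛ R a), mul_comm]

lemma comul_hit (φ : C →ₗ[R] R) (a : C) :
    comul (R := R) (hit φ a) = (hit φ).lTensor C (comul a) := by
  have key : comul ∘ₗ (TensorProduct.rid R C).toLinearMap ∘ₗ φ.lTensor C =
      ((TensorProduct.rid R C).toLinearMap ∘ₗ φ.lTensor C).lTensor C ∘ₗ
        (TensorProduct.assoc R C C C).toLinearMap ∘ₗ comul.rTensor C := by
    ext x y
    simp [← (ℛ R x).eq, TensorProduct.sum_tmul, TensorProduct.tmul_smul, Finset.smul_sum]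
  have := congr($key (comul a))
  simp only [LinearMap.comp_apply, LinearEquiv.coe_coe, coassoc_apply] at this
  rw [hit_apply, this, ← LinearMap.lTensor_comp_apply]
  rfl

end Hit

lemma hit_mul_of_isGroupLikeElem {R A : Type*} [CommSemiring R] [Semiring A] [Bialgebra R A]
    {u : A} (hu : IsGroupLikeElem R u) (φ : A →ₗ[R] R) (x : A) :
    hit φ (x * u) = hit (φ ∘ₗ LinearMap.mulRight R u) x * u := by
  have : u ⊗ₜ[R] u = ((1 : A) ⊗ₜ[R] u) * (u ⊗ₜ[R] 1) := by
    simp [Algebra.TensorProduct.tmul_mul_tmul]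
  rw [hit_apply, Bialgebra.comul_mul, hu.comul_eq_tmul_self, this, ← mul_assoc,
    rid_lTensor_mul_tmul_one, rid_lTensor_mul_one_tmul]
  rfl

section Coaction

variable {R C : Type*} [CommSemiring R] [AddCommMonoid C] [Module R C] [Coalgebra R C]
  [Module.Finite R C] [Module.Projective R C]

noncomputable def coaction : (C →ₗ[R] R) →ₗ[R] (C →ₗ[R] R) ⊗[R] C :=
  (dualTensorHomEquiv R C C).symm.toLinearMap ∘ₗ hit

@[simp] lemma dualTensorHom_coaction (φ : C →ₗ[R] R) :
    dualTensorHom R C C (coaction φ) = hit φ :=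
  (dualTensorHomEquiv R C C).apply_symm_apply (hit φ)

lemma coaction_eq_of_dualTensorHom_eq {φ : C →ₗ[R] R} {t : (C →ₗ[R] R) ⊗[R] C}
    (ht : dualTensorHom R C C t = hit φ) : coaction φ = t :=
  (dualTensorHomEquiv R C C).injective (by simp [dualTensorHomEquiv, ht])

lemma rid_lTensor_counit_coaction (φ : C →ₗ[R] R) :
    TensorProduct.rid R _ (counit.lTensor _ (coaction φ)) = φ := by
  calc TensorProduct.rid R _ (counit.lTensor _ (coaction φ))
      = dualTensorHom R C R (counit.lTensor _ (coaction φ)) := by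
        rw [dualTensorHom_self_right]; rfl
    _ = counit ∘ₗ hit φ := by
        rw [← LinearMap.comp_apply (dualTensorHom R C R), dualTensorHom_comp_lTensor]; simp
    _ = φ := LinearMap.ext (counit_hit φ)

lemma rTensor_hit_flip_coaction (φ : C →ₗ[R] R) (y : C) :
    (hit.flip y).rTensor C (coaction φ) = comul (R := R) (hit φ y) := by
  have key (t : (C →ₗ[R] R) ⊗[R] C) :
      (hit.flip y).rTensor C t = (dualTensorHom R C C t).lTensor C (comul y) := by
    induction t with
    | zero => simp
    | tmul ψ c =>
      simp [hit_eq_sum ψ (ℛ R y), ← (ℛ R y).eq, TensorProduct.sum_tmul, TensorProduct.smul_tmul]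
    | add s t hs ht => simp [hs, ht, LinearMap.lTensor_add]
  rw [key, dualTensorHom_coaction, comul_hit]

lemma assoc_rTensor_coaction (φ : C →ₗ[R] R) :
    TensorProduct.assoc R _ C C (coaction.rTensor C (coaction φ)) =
      comul.lTensor _ (coaction φ) := by
  apply (dualTensorHomEquiv R C (C ⊗[R] C)).injective
  ext y
  have key (t : (C →ₗ[R] R) ⊗[R] C) :
      dualTensorHom R C (C ⊗[R] C) (TensorProduct.assoc R _ C C (coaction.rTensor C t)) y =
        (hit.flip y).rTensor C t := by
    induction t with
    | zero => simp
    | tmul ψ c => simp [dualTensorHom_assoc_tmul]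
    | add s t hs ht => simp [hs, ht]
  simp only [dualTensorHomEquiv, LinearEquiv.ofBijective_apply, key, rTensor_hit_flip_coaction]
  rw [← LinearMap.comp_apply (dualTensorHom R C (C ⊗[R] C)), dualTensorHom_comp_lTensor]
  simp

end Coaction

namespace HopfAlgebra

variable {R A : Type*} [CommSemiring R] [Semiring A] [HopfAlgebra R A]

def rightAct : (A →ₗ[R] R) →ₗ[R] A →ₗ[R] A →ₗ[R] R :=
  (LinearMap.llcomp R A A R).compl₂ ((LinearMap.mul R A).flip ∘ₗ antipode R)

@[simp] lemma rightAct_apply (φ : A →ₗ[R] R) (h x : A) :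
    rightAct φ h x = φ (x * antipode R h) := rfl

lemma hit_rightAct {ι : Type*} (φ : A →ₗ[R] R) (x : A) {h : A} (r : Repr R h ι) :
    hit (rightAct φ h) x = ∑ i ∈ r.index, hit φ (x * antipode R (r.left i)) * r.right i := by
  calc hit (rightAct φ h) x
      = TensorProduct.rid R A (φ.lTensor A (comul x * ((1 : A) ⊗ₜ antipode R h))) := by
        rw [rid_lTensor_mul_one_tmul]; rfl
    _ = TensorProduct.rid R A (φ.lTensor A
          (∑ i ∈ r.index, comul (x * antipode R (r.left i)) * (r.right i ⊗ₜ[R] (1 : A)))) := by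
        simp only [← HopfAlgebra.sum_comul_antipode_mul r, Finset.mul_sum, Bialgebra.comul_mul,
          mul_assoc]
    _ = ∑ i ∈ r.index, hit φ (x * antipode R (r.left i)) * r.right i := by
        simp only [map_sum, rid_lTensor_mul_tmul_one]; rfl

lemma rightAct_rightAct (φ : A →ₗ[R] R) (u v : A) :
    rightAct (rightAct φ u) v = rightAct φ (u * v) := by
  ext x; simp [HopfAlgebra.antipode_mul_antidistrib, mul_assoc]

lemma rightAct_algebraMap (φ : A →ₗ[R] R) (r : R) : rightAct φ (algebraMap R A r) = r • φ := by
  ext x; simp [Algebra.algebraMap_eq_smul_one]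

section CointegralProj

variable [Module.Finite R A] [Module.Projective R A]

noncomputable def cointegralProj : (A →ₗ[R] R) →ₗ[R] A →ₗ[R] R :=
  TensorProduct.lift (rightAct.compl₂ (antipode R)) ∘ₗ coaction

lemma lift_rightAct_rTensor_cointegralProj_coaction (φ : A →ₗ[R] R) :
    TensorProduct.lift rightAct (cointegralProj.rTensor A (coaction φ)) = φ := by
  have hassoc : TensorProduct.lift rightAct ∘ₗ
      (TensorProduct.lift (rightAct.compl₂ (antipode R))).rTensor A =
      TensorProduct.lift rightAct ∘ₗ (LinearMap.mul' R A ∘ₗ (antipode R).rTensor A).lTensor _ ∘ₗ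
        (TensorProduct.assoc R _ A A).toLinearMap := by
    ext ψ u v; simp [rightAct_rightAct]
  have hcounit : TensorProduct.lift rightAct ∘ₗ
      (Algebra.linearMap R A ∘ₗ counit).lTensor (A →ₗ[R] R) =
      (TensorProduct.rid R _).toLinearMap ∘ₗ (counit : A →ₗ[R] R).lTensor _ := by
    ext ψ u; simp [rightAct_algebraMap]
  calc TensorProduct.lift rightAct (cointegralProj.rTensor A (coaction φ))
      = TensorProduct.lift rightAct ((LinearMap.mul' R A ∘ₗ (antipode R).rTensor A).lTensor _
          (TensorProduct.assoc R _ A A (coaction.rTensor A (coaction φ)))) := by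
        rw [cointegralProj, LinearMap.rTensor_comp_apply]
        exact congr($hassoc _)
    _ = TensorProduct.rid R _ (counit.lTensor _ (coaction φ)) := by
        rw [assoc_rTensor_coaction, ← LinearMap.lTensor_comp_apply, LinearMap.comp_assoc,
          HopfAlgebra.mul_antipode_rTensor_comul]
        exact congr($hcounit _)
    _ = φ := rid_lTensor_counit_coaction φ

lemma hit_cointegralProj (φ : A →ₗ[R] R) (x : A) :
    hit (cointegralProj φ) x = cointegralProj φ x • 1 := by
  -- `hit (P φ) x = Q ((id ⊗ Δ) (ρ φ))`; by coassociativity of `ρ` this is `Q ((ρ ⊗ id) (ρ φ))`,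
  -- which collapses to `P φ x • 1` by the antipode axiom.
  let Q : (A →ₗ[R] R) ⊗[R] (A ⊗[R] A) →ₗ[R] A := LinearMap.mul' R A ∘ₗ
    TensorProduct.map (TensorProduct.lift hit ∘ₗ
      (LinearMap.mulLeft R x ∘ₗ antipode R ∘ₗ antipode R).lTensor _) (antipode R) ∘ₗ
    (TensorProduct.assoc R _ A A).symm.toLinearMap ∘ₗ
    (TensorProduct.comm R A A).toLinearMap.lTensor _
  have hQ (ψ : A →ₗ[R] R) (u v : A) :
      Q (ψ ⊗ₜ (u ⊗ₜ v)) = hit ψ (x * antipode R (antipode R v)) * antipode R u := by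
    simp [Q]
  have hhit (t : (A →ₗ[R] R) ⊗[R] A) :
      hit (TensorProduct.lift (rightAct.compl₂ (antipode R)) t) x = Q (comul.lTensor _ t) := by
    induction t with
    | zero => simp
    | tmul ψ h =>
      simp [hit_rightAct ψ x (ℛ R h).antipode, ← (ℛ R h).eq, TensorProduct.tmul_sum, hQ]
    | add s t hs ht => simp [hs, ht]
  have hcoinv (t : (A →ₗ[R] R) ⊗[R] A) :
      Q (TensorProduct.assoc R _ A A (coaction.rTensor A t)) =
        TensorProduct.lift (rightAct.compl₂ (antipode R)) t x • 1 := by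
    induction t with
    | zero => simp
    | tmul ψ h =>
      have (s : (A →ₗ[R] R) ⊗[R] A) : Q (TensorProduct.assoc R _ A A (s ⊗ₜ h)) =
          LinearMap.mul' R A ((antipode R).lTensor A
            ((hit.flip (x * antipode R (antipode R h))).rTensor A s)) := by
        induction s with
        | zero => simp
        | tmul ψ u => simp [hQ]
        | add s t hs ht => simp [TensorProduct.add_tmul, hs, ht]
      simp [this, rTensor_hit_flip_coaction, Algebra.algebraMap_eq_smul_one]
    | add s t hs ht => simp [hs, ht, add_smul]
  rw [cointegralProj, LinearMap.comp_apply, hhit, ← assoc_rTensor_coaction, hcoinv]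

lemma coaction_rightAct {w : A →ₗ[R] R} (hw : ∀ x, hit w x = w x • 1) (h : A) :
    coaction (rightAct w h) = (rightAct w).rTensor A (comul h) := by
  refine coaction_eq_of_dualTensorHom_eq (LinearMap.ext fun y ↦ ?_)
  simp [hit_rightAct w y (ℛ R h), hw, ← (ℛ R h).eq]

lemma cointegralProj_rightAct {w : A →ₗ[R] R} (hw : ∀ x, hit w x = w x • 1) (h : A) :
    cointegralProj (rightAct w h) = counit (R := R) h • w := by
  rw [cointegralProj, LinearMap.comp_apply, coaction_rightAct hw, ← (ℛ R h).eq]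
  simp only [map_sum, LinearMap.rTensor_tmul, TensorProduct.lift.tmul, LinearMap.compl₂_apply,
    rightAct_rightAct]
  rw [← map_sum, sum_mul_antipode_eq_algebraMap_counit, rightAct_algebraMap]

end CointegralProj

end HopfAlgebra

section LeftCointegrals

variable {k H : Type} [Field k] [Ring H] [HopfAlgebra k H]

lemma mem_leftCointegrals_iff {g : H} {φ : H →ₗ[k] k} :
    φ ∈ leftCointegrals k H g ↔ ∀ a, hit φ a = φ a • g := Iff.rfl

lemma comp_mulRight_mem_leftCointegrals {g u : H} (hu : IsGroupLikeElem k u) {φ : H →ₗ[k] k}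
    (hφ : φ ∈ leftCointegrals k H g) :
    φ ∘ₗ LinearMap.mulRight k u ∈ leftCointegrals k H (g * antipode k u) := by
  intro x
  calc hit (φ ∘ₗ LinearMap.mulRight k u) x
      = hit (φ ∘ₗ LinearMap.mulRight k u) x * u * antipode k u := by
        rw [mul_assoc, hu.mul_antipode_cancel, mul_one]
    _ = (φ ∘ₗ LinearMap.mulRight k u) x • (g * antipode k u) := by
        rw [← hit_mul_of_isGroupLikeElem hu, mem_leftCointegrals_iff.1 hφ, smul_mul_assoc]; rfl

noncomputable def leftCointegralsEquivOne {g : H} (hg : IsGroupLikeElem k g) :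
    leftCointegrals k H g ≃ₗ[k] leftCointegrals k H 1 :=
  LinearEquiv.ofLinearMap
    ((LinearMap.lcomp k k (LinearMap.mulRight k g)).restrict fun _ hφ ↦ by
      simpa [LinearMap.lcomp_apply', hg] using comp_mulRight_mem_leftCointegrals hg hφ)
    ((LinearMap.lcomp k k (LinearMap.mulRight k (antipode k g))).restrict fun _ hψ ↦ by
      simpa [LinearMap.lcomp_apply', hg] using comp_mulRight_mem_leftCointegrals hg.antipode hψ)
    (by ext ψ x; simp [mul_assoc, hg])
    (by ext φ x; simp [mul_assoc, hg])

variable [Module.Finite k H]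

variable (k H) in
noncomputable def cointegralTensorEquiv : leftCointegrals k H 1 ⊗[k] H ≃ₗ[k] (H →ₗ[k] k) :=
  let P : (H →ₗ[k] k) →ₗ[k] leftCointegrals k H 1 :=
    cointegralProj.codRestrict _ fun φ ↦ mem_leftCointegrals_iff.2 (hit_cointegralProj φ)
  LinearEquiv.ofLinearMap
    (TensorProduct.lift (rightAct ∘ₗ (leftCointegrals k H 1).subtype))
    (P.rTensor H ∘ₗ coaction)
    (by
      have hP : TensorProduct.lift (rightAct ∘ₗ (leftCointegrals k H 1).subtype) ∘ₗ P.rTensor H =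
          TensorProduct.lift rightAct ∘ₗ cointegralProj.rTensor H := by
        ext; rfl
      ext φ : 1
      exact congr($hP (coaction φ)).trans (lift_rightAct_rTensor_cointegralProj_coaction φ))
    (by
      refine TensorProduct.ext' fun w h ↦ ?_
      have hw := mem_leftCointegrals_iff.1 w.2
      have hPw : P ∘ₗ rightAct w = LinearMap.toSpanSingleton k _ w ∘ₗ counit := by
        ext h : 1
        exact Subtype.ext (cointegralProj_rightAct hw h)
      simp only [LinearMap.comp_apply, TensorProduct.lift.tmul, Submodule.subtype_apply,
        coaction_rightAct hw, ← LinearMap.rTensor_comp_apply, hPw]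
      rw [LinearMap.rTensor_comp_apply, rTensor_counit_comul]
      simp)

theorem finrank_leftCointegrals_one : Module.finrank k (leftCointegrals k H 1) = 1 := by
  have := Bialgebra.nontrivial k (A := H)
  have := Module.Free.of_divisionRing k (leftCointegrals k H 1)
  have h := (cointegralTensorEquiv k H).finrank_eq
  rw [Module.finrank_tensorProduct, Module.finrank_linearMap_self] at h
  exact Nat.eq_of_mul_eq_mul_right Module.finrank_pos (h.trans (one_mul _).symm)

end LeftCointegrals

theorem stmt6 (k H : Type) [Field k] [Ring H] [HopfAlgebra k H] [Module.Finite k H]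
    (g : H) (hg : IsGrouplike k H g) :
    Module.finrank k (leftCointegrals k H g) = 1 :=
  (leftCointegralsEquivOne ⟨hg.2, hg.1⟩).finrank_eq.trans finrank_leftCointegrals_one
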